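/- There are exactly 336 directed gashes (3 edge orientations × 2 perpendicular directions × 8·7 ordered pairs of distinct labels), the classes [g] partition the set of directed gashes, every class [g] has cardinality 1, 4, 5, or 6, and exactly 84 directed gashes g satisfy [g] = {g}. -/

import Mathlib

/-!
STATEMENT 3: There are exactly 336 directed gashes, the classes [g]
partition the set of directed gashes, every class has cardinality 1, 4, 5
or 6, and exactly 84 directed gashes g satisfy [g] = {g}.
-/

set_option maxHeartbeats 1000000

open scoped Classical

/-- Puzzle labels are encoded as natural numbers; the meaningful ones are
0–7, and 0, 1, 2 are the *simple* labels. -/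
abbrev Label := ℕ

/-- The valid upward triangular puzzle pieces in standard position,
as (left, right, bottom) label triples. -/
def basePieces : List (Label × Label × Label) :=
  [(0,0,0), (1,1,1), (2,2,2), (0,1,3), (1,2,4), (0,2,5), (3,2,6), (0,4,7)]

/-- Valid upward triangular pieces: the base list together with its
120° and 240° rotations. -/
def ValidUp (l r b : Label) : Prop :=
  (l, r, b) ∈ basePieces ∨ (r, b, l) ∈ basePieces ∨ (b, l, r) ∈ basePieces

/-- Valid downward triangular pieces, with (left, right, top) labels:
precisely the rotations (by 60°, 180° or 300°) of valid upward pieces. -/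
def ValidDown (l r t : Label) : Prop := ValidUp r l t

/-- Valid *vertical* equivariant (rhombus) puzzle pieces: opposite sides
carry equal labels, and `ValidEquivVert p q` means that the NW and SE sides
carry `p` while the NE and SW sides carry `q`, where `(p, q)` runs through
the paper's list of label pairs in its fixed orientation. -/
def ValidEquivVert (p q : Label) : Prop :=
  (p, q) ∈ ([(0,1), (1,2), (0,2), (2,3), (0,4), (3,4), (0,6), (2,7)] :
    List (Label × Label))

/-- A directed gash, recorded without its location in a puzzle: `dir : Fin 6`
encodes the orientation of the underlying lattice edge together with the
perpendicular direction of the gash, as the unit normal vector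
`exp (π i (2 dir + 1) / 6)` pointing towards the side of the original label;
`orig` and `new` are the original and the new label. -/
structure PreGash where
  dir : Fin 6
  orig : Label
  new : Label
deriving DecidableEq

/-- `g` is an honest directed gash: its two labels are distinct puzzle
labels (hence there are 6 · 8 · 7 = 336 directed gashes). -/
def IsDGash (g : PreGash) : Prop := g.orig ≠ g.new ∧ g.orig < 8 ∧ g.new < 8

/-- Immediate reachability: `h` is obtained from `g` by propagating `g`
across one triangular puzzle piece.  Normal directions: `1`/`5`/`3` point
into an upward triangle through its bottom/left/right side, and `4`/`0`/`2`
point into a downward triangle through its top/left/right side; the piece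
`q` carries the original label of `g` on the gashed side, its replacement
`q'` carries the new label there, `q` and `q'` agree on exactly one further
side, and `h` sits on the remaining side, with original label from `q` and
new label from `q'`, directed away from the replaced piece. -/
def Imm (g h : PreGash) : Prop :=
  (g.dir = 1 ∧ ∃ l r r', ValidUp l r g.orig ∧ ValidUp l r' g.new ∧ r ≠ r' ∧ h = ⟨0, r, r'⟩) ∨
  (g.dir = 1 ∧ ∃ l l' r, ValidUp l r g.orig ∧ ValidUp l' r g.new ∧ l ≠ l' ∧ h = ⟨2, l, l'⟩) ∨
  (g.dir = 5 ∧ ∃ r b b', ValidUp g.orig r b ∧ ValidUp g.new r b' ∧ b ≠ b' ∧ h = ⟨4, b, b'⟩) ∨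
  (g.dir = 5 ∧ ∃ r r' b, ValidUp g.orig r b ∧ ValidUp g.new r' b ∧ r ≠ r' ∧ h = ⟨0, r, r'⟩) ∨
  (g.dir = 3 ∧ ∃ l b b', ValidUp l g.orig b ∧ ValidUp l g.new b' ∧ b ≠ b' ∧ h = ⟨4, b, b'⟩) ∨
  (g.dir = 3 ∧ ∃ l l' b, ValidUp l g.orig b ∧ ValidUp l' g.new b ∧ l ≠ l' ∧ h = ⟨2, l, l'⟩) ∨
  (g.dir = 4 ∧ ∃ l r r', ValidDown l r g.orig ∧ ValidDown l r' g.new ∧ r ≠ r' ∧ h = ⟨5, r, r'⟩) ∨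
  (g.dir = 4 ∧ ∃ l l' r, ValidDown l r g.orig ∧ ValidDown l' r g.new ∧ l ≠ l' ∧ h = ⟨3, l, l'⟩) ∨
  (g.dir = 0 ∧ ∃ r t t', ValidDown g.orig r t ∧ ValidDown g.new r t' ∧ t ≠ t' ∧ h = ⟨1, t, t'⟩) ∨
  (g.dir = 0 ∧ ∃ r r' t, ValidDown g.orig r t ∧ ValidDown g.new r' t ∧ r ≠ r' ∧ h = ⟨5, r, r'⟩) ∨
  (g.dir = 2 ∧ ∃ l t t', ValidDown l g.orig t ∧ ValidDown l g.new t' ∧ t ≠ t' ∧ h = ⟨1, t, t'⟩) ∨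
  (g.dir = 2 ∧ ∃ l l' t, ValidDown l g.orig t ∧ ValidDown l' g.new t ∧ l ≠ l' ∧ h = ⟨3, l, l'⟩)

/-- The class `[g]` of a directed gash: all directed gashes reachable from
`g` by finitely many steps of immediate reachability. -/
def classOf (g : PreGash) : Set PreGash := {h | Relation.ReflTransGen Imm g h}

/-- The opposite gash: interchange the two labels, keep the direction. -/
def PreGash.opp (g : PreGash) : PreGash := ⟨g.dir, g.new, g.orig⟩

/-- `g` and `h` are in opposite classes. -/
def OppClasses (g h : PreGash) : Prop := classOf g.opp = classOf h


/-!
Everything is finite. Whether `Imm g h` holds is decided by listing, for the piece that `g` points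
into, the valid pieces carrying the original and the new label on the gashed side; classes are
then computed by breadth-first search, which is already closed after five rounds. Immediate
reachability is symmetric on directed gashes (propagating `h` back across the same pair of pieces
returns `g`), so reachability is an equivalence relation there and the classes partition.
-/

section Explore

variable {α : Type*} [DecidableEq α] (next : α → List α)

def exploreStep (L : List α) : List α := (L ++ L.flatMap next).dedup

def explore (n : ℕ) (a : α) : List α := (exploreStep next)^[n] [a]

lemma subset_exploreStep (L : List α) : L ⊆ exploreStep next L := fun _ hx => by
  simp [exploreStep, hx]

lemma mem_explore_self (n : ℕ) (a : α) : a ∈ explore next n a := by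
  induction n with
  | zero => simp [explore]
  | succ n ih =>
    rw [explore, Function.iterate_succ_apply']
    exact subset_exploreStep next _ ih

lemma nodup_explore (n : ℕ) (a : α) : (explore next n a).Nodup := by
  cases n with
  | zero => simp [explore]
  | succ n => rw [explore, Function.iterate_succ_apply']; exact List.nodup_dedup _

lemma reflTransGen_of_mem_explore {n : ℕ} {a b : α} (hb : b ∈ explore next n a) :
    Relation.ReflTransGen (fun x y => y ∈ next x) a b := by
  induction n generalizing b with
  | zero => rw [List.mem_singleton.mp hb]
  | succ n ih =>
    rw [explore, Function.iterate_succ_apply'] at hb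
    simp only [exploreStep, List.mem_dedup, List.mem_append, List.mem_flatMap] at hb
    rcases hb with hb | ⟨c, hc, hcb⟩
    · exact ih hb
    · exact (ih hc).tail hcb

lemma mem_explore_of_reflTransGen {n : ℕ} {a b : α}
    (hclosed : ∀ x ∈ explore next n a, ∀ y ∈ next x, y ∈ explore next n a)
    (hab : Relation.ReflTransGen (fun x y => y ∈ next x) a b) : b ∈ explore next n a := by
  induction hab with
  | refl => exact mem_explore_self next n a
  | tail _ hcb ih => exact hclosed _ ih _ hcb

lemma setOf_reflTransGen_eq_explore {n : ℕ} {a : α}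
    (hclosed : ∀ x ∈ explore next n a, ∀ y ∈ next x, y ∈ explore next n a) :
    {b | Relation.ReflTransGen (fun x y => y ∈ next x) a b} = {b | b ∈ explore next n a} :=
  Set.ext fun _ => ⟨mem_explore_of_reflTransGen next hclosed, reflTransGen_of_mem_explore next⟩

end Explore

section ReflTransGen

variable {α : Type*} {r : α → α → Prop}

lemma Relation.ReflTransGen.symm_of_forall_mem {S : Set α}
    (hS : ∀ a ∈ S, ∀ b, r a b → b ∈ S ∧ r b a) {a b : α} (ha : a ∈ S)
    (hab : Relation.ReflTransGen r a b) : b ∈ S ∧ Relation.ReflTransGen r b a := by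
  induction hab with
  | refl => exact ⟨ha, .refl⟩
  | tail _ hcd ih =>
    obtain ⟨hd, hdc⟩ := hS _ ih.1 _ hcd
    exact ⟨hd, ih.2.head hdc⟩

lemma setOf_reflTransGen_eq_singleton_iff {a : α} :
    {b | Relation.ReflTransGen r a b} = {a} ↔ ∀ b, r a b → b = a := by
  constructor
  · intro h b hab
    have hb : b ∈ {b | Relation.ReflTransGen r a b} := .single hab
    rwa [h] at hb
  · intro h
    ext b
    refine ⟨fun hab => ?_, fun hb => hb ▸ .refl⟩
    induction hab with
    | refl => rfl
    | tail _ hcb ih => exact h _ (ih ▸ hcb)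

end ReflTransGen

lemma List.Nodup.ncard_setOf_mem {α : Type*} {l : List α} (hl : l.Nodup) :
    {a | a ∈ l}.ncard = l.length := by
  rw [show {a | a ∈ l} = ↑l.toFinset by ext; simp, Set.ncard_coe_finset,
    List.toFinset_card_of_nodup hl]

def rotations (p : Label × Label × Label) : List (Label × Label × Label) :=
  [p, (p.2.2, p.1, p.2.1), (p.2.1, p.2.2, p.1)]

def upPieces : List (Label × Label × Label) := basePieces.flatMap rotations

lemma validUp_iff_mem {l r b : Label} : ValidUp l r b ↔ (l, r, b) ∈ upPieces := by
  simp only [ValidUp, upPieces, rotations, List.mem_flatMap, List.mem_cons, Prod.ext_iff,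
    List.not_mem_nil, or_false, Prod.exists]
  constructor
  · rintro (h | h | h) <;> exact ⟨_, _, _, h, by simp⟩
  · rintro ⟨a, c, d, h, ⟨rfl, rfl, rfl⟩ | ⟨rfl, rfl, rfl⟩ | ⟨rfl, rfl, rfl⟩⟩ <;> simp_all

/-- An upward piece `(l, r, b)` read from a gash of direction `d` as (gashed side, first other
side, second other side), in the order in which `Imm` names the sides. For `d = 0, 2, 4` it stands
for the downward piece with (left, right, top) labels `(r, l, b)`. -/
def readPiece : Fin 6 → Label × Label × Label → Label × Label × Label
  | 0, (l, r, b) => (r, l, b)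
  | 1, (l, r, b) => (b, l, r)
  | 2, (l, r, b) => (l, r, b)
  | 3, (l, r, b) => (r, l, b)
  | 4, (l, r, b) => (b, r, l)
  | 5, (l, r, b) => (l, r, b)

def sidesAt (d : Fin 6) (x : Label) : List (Label × Label) :=
  upPieces.filterMap fun p => if (readPiece d p).1 = x then some (readPiece d p).2 else none

lemma mem_sidesAt {d : Fin 6} {x y z : Label} :
    (y, z) ∈ sidesAt d x ↔ ∃ p ∈ upPieces, readPiece d p = (x, y, z) := by
  simp only [sidesAt, List.mem_filterMap, Option.ite_none_right_eq_some, Option.some.injEq]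
  constructor
  · rintro ⟨p, hp, hx, hyz⟩
    exact ⟨p, hp, Prod.ext hx hyz⟩
  · rintro ⟨p, hp, he⟩
    exact ⟨p, hp, by rw [he], by rw [he]⟩

/-- The directions of the propagated gash when the first, resp. the second, other side of the
two pieces agrees. -/
def exits : Fin 6 → Fin 6 × Fin 6
  | 0 => (1, 5)
  | 1 => (0, 2)
  | 2 => (1, 3)
  | 3 => (4, 2)
  | 4 => (5, 3)
  | 5 => (4, 0)

def pairNexts (d₁ d₂ : Fin 6) (A B : List (Label × Label)) : List PreGash :=
  A.flatMap fun a => B.filterMap fun b =>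
    if a.1 = b.1 ∧ a.2 ≠ b.2 then some ⟨d₁, a.2, b.2⟩
    else if a.2 = b.2 ∧ a.1 ≠ b.1 then some ⟨d₂, a.1, b.1⟩ else none

lemma mem_pairNexts {d₁ d₂ : Fin 6} {A B : List (Label × Label)} {h : PreGash} :
    h ∈ pairNexts d₁ d₂ A B ↔
      (∃ x y y', (x, y) ∈ A ∧ (x, y') ∈ B ∧ y ≠ y' ∧ h = ⟨d₁, y, y'⟩) ∨
      (∃ x x' y, (x, y) ∈ A ∧ (x', y) ∈ B ∧ x ≠ x' ∧ h = ⟨d₂, x, x'⟩) := by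
  simp only [pairNexts, List.mem_flatMap, List.mem_filterMap, Prod.exists]
  constructor
  · rintro ⟨x, y, hA, x', y', hB, he⟩
    split_ifs at he with h₁ h₂ <;> cases he
    · obtain ⟨rfl, hy⟩ := h₁
      exact Or.inl ⟨x, y, y', hA, hB, hy, rfl⟩
    · obtain ⟨rfl, hx⟩ := h₂
      exact Or.inr ⟨x, x', y, hA, hB, hx, rfl⟩
  · rintro (⟨x, y, y', hA, hB, hy, rfl⟩ | ⟨x, x', y, hA, hB, hx, rfl⟩)
    · exact ⟨x, y, hA, x, y', hB, by simp [hy]⟩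
    · exact ⟨x, y, hA, x', y, hB, by simp [hx]⟩

def nexts (g : PreGash) : List PreGash :=
  pairNexts (exits g.dir).1 (exits g.dir).2 (sidesAt g.dir g.orig) (sidesAt g.dir g.new)

lemma imm_iff_mem_nexts {g h : PreGash} : Imm g h ↔ h ∈ nexts g := by
  obtain ⟨d, o, n⟩ := g
  fin_cases d <;>
    simp [Imm, nexts, exits, mem_pairNexts, mem_sidesAt, ValidDown, validUp_iff_mem, readPiece]

lemma imm_eq_mem_nexts : Imm = fun g h => h ∈ nexts g :=
  funext₂ fun _ _ => propext imm_iff_mem_nexts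

def gashes : List PreGash :=
  (List.finRange 6).flatMap fun d => (List.range 8).flatMap fun o =>
    ((List.range 8).filter (· ≠ o)).map fun n => ⟨d, o, n⟩

lemma mem_gashes {g : PreGash} : g ∈ gashes ↔ IsDGash g := by
  obtain ⟨d, o, n⟩ := g
  simp only [gashes, IsDGash, List.mem_flatMap, List.mem_finRange, List.mem_range, List.mem_map,
    List.mem_filter, PreGash.mk.injEq, decide_eq_true_eq]
  constructor
  · rintro ⟨_, -, _, ho, _, ⟨hn, hne⟩, rfl, rfl, rfl⟩
    exact ⟨Ne.symm hne, ho, hn⟩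
  · rintro ⟨hne, ho, hn⟩
    exact ⟨d, trivial, o, ho, n, ⟨hn, Ne.symm hne⟩, rfl, rfl, rfl⟩

lemma nodup_gashes : gashes.Nodup := by decide +kernel

lemma length_gashes : gashes.length = 336 := by decide +kernel

lemma nexts_symmetric_on_gashes : ∀ g ∈ gashes, ∀ h ∈ nexts g, h ∈ gashes ∧ g ∈ nexts h := by
  decide +kernel

lemma explore_nexts_closed :
    ∀ g ∈ gashes, ∀ a ∈ explore nexts 5 g, ∀ b ∈ nexts a, b ∈ explore nexts 5 g := by
  decide +kernel

lemma length_explore_nexts : ∀ g ∈ gashes, (explore nexts 5 g).length ∈ [1, 4, 5, 6] := by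
  decide +kernel

lemma length_filter_forall_nexts_eq_self :
    (gashes.filter fun g => ∀ h ∈ nexts g, h = g).length = 84 := by
  decide +kernel

lemma IsDGash.imm_symm {g h : PreGash} (hg : IsDGash g) (hgh : Imm g h) :
    IsDGash h ∧ Imm h g := by
  simp only [imm_iff_mem_nexts, ← mem_gashes] at *
  exact nexts_symmetric_on_gashes g hg h hgh

lemma classOf_eq_explore {g : PreGash} (hg : IsDGash g) :
    classOf g = {h | h ∈ explore nexts 5 g} := by
  rw [classOf, imm_eq_mem_nexts]
  exact setOf_reflTransGen_eq_explore nexts (explore_nexts_closed g (mem_gashes.2 hg))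

lemma classOf_eq_singleton_iff {g : PreGash} : classOf g = {g} ↔ ∀ h ∈ nexts g, h = g := by
  simp only [classOf, setOf_reflTransGen_eq_singleton_iff, imm_iff_mem_nexts]

theorem directed_gash_classes :
    {g : PreGash | IsDGash g}.ncard = 336 ∧
    (∀ g, IsDGash g → ∀ h ∈ classOf g, IsDGash h ∧ classOf h = classOf g) ∧
    (∀ g, IsDGash g → (classOf g).ncard ∈ ({1, 4, 5, 6} : Set ℕ)) ∧
    {g : PreGash | IsDGash g ∧ classOf g = {g}}.ncard = 84 := by
  refine ⟨?_, ?_, ?_, ?_⟩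
  · simp only [← mem_gashes]
    rw [nodup_gashes.ncard_setOf_mem, length_gashes]
  · intro g hg h (hgh : Relation.ReflTransGen Imm g h)
    obtain ⟨hh, hhg⟩ := hgh.symm_of_forall_mem (S := {g | IsDGash g})
      (fun _ ha _ => IsDGash.imm_symm ha) hg
    exact ⟨hh, Set.ext fun _ => ⟨hgh.trans, hhg.trans⟩⟩
  · intro g hg
    rw [classOf_eq_explore hg, (nodup_explore _ _ _).ncard_setOf_mem]
    simpa using length_explore_nexts g (mem_gashes.2 hg)
  · have hset : {g : PreGash | IsDGash g ∧ classOf g = {g}} =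
        {g | g ∈ gashes.filter fun g => ∀ h ∈ nexts g, h = g} := by
      ext g
      simp [mem_gashes, classOf_eq_singleton_iff]
    rw [hset, (nodup_gashes.filter _).ncard_setOf_mem, length_filter_forall_nexts_eq_self]
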